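/- arXiv:2502.16380 — 3 statements merged into one kernel-verified Lean document; each statement's English description precedes it below -/
import Mathlib

section
/- Let P = {x ∈ R^n : Cx ≤ d} be a polytope with all extreme points integral, with d integral, and let H = {x : wᵀx ≥ b} be a halfspace. Then P ∩ H contains an integral point if and only if P ∩ H is nonempty. -/
open Matrix

private lemma dotProduct_continuous {n : ℕ} (w : Fin n → ℝ) :
    Continuous fun x : Fin n → ℝ => w ⬝ᵥ x := by
  unfold dotProduct
  exact continuous_finset_sum _ fun i _ =>
    (continuous_const.mul (continuous_apply i))

/-- For a nonempty bounded polyhedron `P = {x : C x ≤ d}` with integral right-hand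
side and all extreme points integral, and a halfspace `H = {x : wᵀ x ≥ b}`,
`P ∩ H` contains an integral point iff `P ∩ H` is nonempty. -/
theorem integral_point_iff_nonempty (n m : ℕ)
    (C : Matrix (Fin m) (Fin n) ℝ) (d : Fin m → ℝ)
    (hd : ∀ i, ∃ z : ℤ, d i = (z : ℝ))
    (P : Set (Fin n → ℝ)) (hP : P = {x | C.mulVec x ≤ d})
    (hbdd : Bornology.IsBounded P) (hne : P.Nonempty)
    (hint : ∀ μ ∈ Set.extremePoints ℝ P, ∀ i, ∃ z : ℤ, μ i = (z : ℝ))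
    (w : Fin n → ℝ) (b : ℝ) :
    (∃ x ∈ P, w ⬝ᵥ x ≥ b ∧ ∀ i, ∃ z : ℤ, x i = (z : ℝ)) ↔
      (∃ x ∈ P, w ⬝ᵥ x ≥ b) := by
  constructor
  · rintro ⟨x, hx, hb, -⟩; exact ⟨x, hx, hb⟩
  rintro ⟨x, hxP, hxb⟩
  -- the linear functional
  let l : (Fin n → ℝ) →L[ℝ] ℝ :=
    { toFun := fun x => w ⬝ᵥ x
      map_add' := fun a c => dotProduct_add w a c
      map_smul' := by
        intro r a
        simp [dotProduct, Finset.mul_sum, mul_left_comm]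
      cont := dotProduct_continuous w }
  -- P is closed
  have hclosed : IsClosed P := by
    rw [hP]
    have : {x : Fin n → ℝ | C.mulVec x ≤ d} = ⋂ i, {x | C.mulVec x i ≤ d i} := by
      ext y; simp [Pi.le_def]
    rw [this]
    exact isClosed_iInter fun i =>
      isClosed_le (dotProduct_continuous (C i)) continuous_const
  have hcomp : IsCompact P := Metric.isCompact_of_isClosed_isBounded hclosed hbdd
  -- the exposed face of maximizers
  set F : Set (Fin n → ℝ) := {y ∈ P | ∀ z ∈ P, l z ≤ l y} with hF
  have hexp : IsExposed ℝ P F := fun _ => ⟨l, rfl⟩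
  have hFne : F.Nonempty := by
    obtain ⟨y, hyP, hy⟩ := hcomp.exists_isMaxOn hne l.continuous.continuousOn
    exact ⟨y, hyP, fun z hz => hy hz⟩
  have hFcomp : IsCompact F := hexp.isCompact hcomp
  obtain ⟨μ, hμ⟩ := hFcomp.extremePoints_nonempty hFne
  have hμP : μ ∈ Set.extremePoints ℝ P :=
    hexp.isExtreme.extremePoints_subset_extremePoints hμ
  refine ⟨μ, hμ.1.1, ?_, hint μ hμP⟩
  have : l x ≤ l μ := hμ.1.2 x hxP
  exact le_trans hxb this
end

section
/- A {0, ±1}-matrix A is totally unimodular if every column submatrix of A admits an equitable bicoloring, i.e., a partition of its columns into red and blue sets such that for every row, the sum of the red entries minus the sum of the blue entries lies in {-1, 0, 1}. -/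
open Matrix

private lemma mem_signRange_iff (d : ℤ) :
    d ∈ Set.range (SignType.cast : SignType → ℤ) ↔ d = 0 ∨ d = 1 ∨ d = -1 := by
  constructor
  · rintro ⟨s, rfl⟩; cases s <;> simp
  · rintro (rfl | rfl | rfl)
    exacts [⟨0, by simp⟩, ⟨1, by simp⟩, ⟨-1, by simp⟩]

/-- Cofactor expansion: determinant after replacing a column by a standard basis vector. -/
private lemma det_updateCol_single_aux {N : ℕ} (B : Matrix (Fin (N+1)) (Fin (N+1)) ℤ)
    (i₀ j : Fin (N+1)) :
    (B.updateCol j (Pi.single i₀ 1)).det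
      = (-1) ^ (i₀ + j : ℕ) * (B.submatrix (Fin.succAbove i₀) (Fin.succAbove j)).det := by
  rw [Matrix.det_succ_column _ j]
  rw [Finset.sum_eq_single i₀]
  · have h1 : (B.updateCol j (Pi.single i₀ 1)) i₀ j = 1 := by
      rw [Matrix.updateCol_self, Pi.single_eq_same]
    have h2 : (B.updateCol j (Pi.single i₀ 1)).submatrix (Fin.succAbove i₀) (Fin.succAbove j)
        = B.submatrix (Fin.succAbove i₀) (Fin.succAbove j) := by
      ext a b
      simp [Matrix.updateCol_ne (Fin.succAbove_ne j b)]
    rw [h1, h2, mul_one]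
  · intro i _ hi
    have : (B.updateCol j (Pi.single i₀ 1)) i j = 0 := by
      rw [Matrix.updateCol_self, Pi.single_eq_of_ne hi]
    rw [this, mul_zero, zero_mul]
  · intro h; exact absurd (Finset.mem_univ i₀) h

private lemma vec_eq_zero_of_mulVec_eq_zero {N : ℕ} {B : Matrix (Fin N) (Fin N) ℤ}
    (hd : B.det ≠ 0) {v : Fin N → ℤ} (hv : B.mulVec v = 0) : v = 0 := by
  have h := congrArg (B.adjugate.mulVec) hv
  rw [Matrix.mulVec_mulVec, Matrix.adjugate_mul, Matrix.smul_mulVec,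
    Matrix.one_mulVec, Matrix.mulVec_zero] at h
  funext j
  have hj := congrFun h j
  simp only [Pi.smul_apply, smul_eq_mul, Pi.zero_apply, mul_eq_zero] at hj
  rcases hj with hj | hj
  · exact absurd hj hd
  · exact hj

/-- Integer version of Ghouila-Houri (column version). -/
private lemma gh_int {m n : ℕ} (A : Matrix (Fin m) (Fin n) ℤ)
    (hcol : ∀ S : Finset (Fin n), ∃ c : Fin n → Bool,
      ∀ i, (∑ j ∈ S, (if c j then A i j else - A i j)) ∈ ({-1, 0, 1} : Set ℤ)) :
    A.IsTotallyUnimodular := by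
  intro k
  induction k with
  | zero =>
    intro f g _ _
    exact ⟨1, by simp⟩
  | succ k ih =>
    intro f g hf hg
    classical
    set B := A.submatrix f g with hB
    rw [mem_signRange_iff]
    by_cases hd : B.det = 0
    · exact Or.inl hd
    refine Or.inr ?_
    -- Cramer vector
    set y : Fin (k+1) → ℤ := B.cramer (Pi.single 0 1) with hy
    have hyB : B.mulVec y = B.det • Pi.single 0 1 := Matrix.mulVec_cramer B _
    have hyval : ∀ j, y j = 0 ∨ y j = 1 ∨ y j = -1 := by
      intro j
      have h1 : y j = (-1) ^ (((0 : Fin (k+1)) : ℕ) + (j : ℕ)) *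
          (B.submatrix (Fin.succAbove 0) (Fin.succAbove j)).det := by
        rw [hy, Matrix.cramer_apply, det_updateCol_single_aux]
      have h2 : (B.submatrix (Fin.succAbove 0) (Fin.succAbove j)).det
          ∈ Set.range (SignType.cast : SignType → ℤ) := by
        rw [hB, Matrix.submatrix_submatrix]
        exact ih (f ∘ Fin.succAbove 0) (g ∘ Fin.succAbove j)
          (hf.comp Fin.succAbove_right_injective) (hg.comp Fin.succAbove_right_injective)
      rw [mem_signRange_iff] at h2
      rcases neg_one_pow_eq_or ℤ (((0 : Fin (k+1)) : ℕ) + (j : ℕ)) with hp | hp <;>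
        rcases h2 with h2 | h2 | h2 <;> rw [h1, hp, h2] <;> norm_num
    -- support of y
    set S : Finset (Fin (k+1)) := Finset.univ.filter (fun j => y j ≠ 0) with hS
    have hSy : ∀ j ∈ S, y j = 1 ∨ y j = -1 := by
      intro j hj
      have hj' : y j ≠ 0 := by simpa [hS] using hj
      rcases hyval j with h | h | h
      · exact absurd h hj'
      · exact Or.inl h
      · exact Or.inr h
    have hSne : S.Nonempty := by
      rcases Finset.eq_empty_or_nonempty S with h | h
      · exfalso
        have hy0 : y = 0 := by
          funext j
          simp only [Pi.zero_apply]
          by_contra hj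
          have : j ∈ S := by simp [hS, hj]
          rw [h] at this
          exact absurd this (Finset.notMem_empty j)
        apply hd
        have h0 := congrFun hyB 0
        rw [hy0, Matrix.mulVec_zero] at h0
        simpa using h0.symm
      · exact h
    obtain ⟨j₀, hj₀⟩ := hSne
    -- coloring
    obtain ⟨c, hc⟩ := hcol (S.image g)
    set ε : Fin (k+1) → ℤ := fun j => if c (g j) then 1 else -1 with hε
    set z : Fin (k+1) → ℤ := fun i => ∑ j ∈ S, ε j * B i j with hz
    have hεval : ∀ j, ε j = 1 ∨ ε j = -1 := by
      intro j
      by_cases hcc : c (g j) <;> simp [hε, hcc]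
    have hzval : ∀ i, z i = 0 ∨ z i = 1 ∨ z i = -1 := by
      intro i
      have := hc (f i)
      rw [Finset.sum_image (fun a ha b hb hab => hg hab)] at this
      have heq : ∀ j ∈ S, (if c (g j) then A (f i) (g j) else - A (f i) (g j)) = ε j * B i j := by
        intro j _
        by_cases hcc : c (g j) <;> simp [hε, hcc, hB]
      rw [Finset.sum_congr rfl heq] at this
      simpa [hz, Set.mem_insert_iff, or_comm, or_left_comm] using this
    set w : Fin (k+1) → ℤ := fun j => if j ∈ S then ε j else 0 with hw
    have hBw : B.mulVec w = z := by
      funext i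
      rw [Matrix.mulVec, dotProduct]
      rw [hz]
      rw [Finset.sum_congr rfl (fun j _ => by
        rw [hw]
        by_cases hj : j ∈ S <;> simp [hj, mul_comm] : ∀ j ∈ Finset.univ,
          B i j * w j = if j ∈ S then ε j * B i j else 0)]
      rw [Finset.sum_ite_mem, Finset.univ_inter]
    -- parity
    have hpar : ∀ i, i ≠ 0 → z i = 0 := by
      intro i hi
      have h0 : ∑ j, B i j * y j = 0 := by
        have h := congrFun hyB i
        rw [Matrix.mulVec, dotProduct] at h
        rw [h]
        simp [Pi.single_eq_of_ne hi]
      have hkey : ((z i : ℤ) : ZMod 2) = 0 := by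
        have hstep : ((z i : ℤ) : ZMod 2) = ((∑ j, B i j * y j : ℤ) : ZMod 2) := by
          rw [hz]
          push_cast
          rw [← Finset.sum_subset (Finset.subset_univ S) (fun x _ hx => by
            have hx0 : y x = 0 := by
              by_contra hxx
              exact hx (by simp [hS, hxx])
            simp [hx0])]
          refine Finset.sum_congr rfl fun j hj => ?_
          have h1 : ((ε j : ℤ) : ZMod 2) = 1 := by
            rcases hεval j with h | h <;> rw [h] <;> decide
          have h2 : ((y j : ℤ) : ZMod 2) = 1 := by
            rcases hSy j hj with h | h <;> rw [h] <;> decide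
          rw [h1, h2, one_mul, mul_one]
        rw [hstep, h0]
        simp
      rcases hzval i with h | h | h
      · exact h
      · rw [h] at hkey; exact absurd hkey (by decide)
      · rw [h] at hkey; exact absurd hkey (by decide)
    -- case on z 0
    have hwj₀ : w j₀ = 1 ∨ w j₀ = -1 := by
      rw [hw]; simp only [hj₀, if_true]
      exact hεval j₀
    rcases hzval 0 with h00 | h01
    · exfalso
      have hz0 : z = 0 := by
        funext i
        by_cases hi : i = 0
        · rw [hi]; exact h00
        · exact hpar i hi
      have hw0 : w = 0 := vec_eq_zero_of_mulVec_eq_zero hd (by rw [hBw, hz0])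
      have := congrFun hw0 j₀
      rcases hwj₀ with h | h <;> rw [h] at this <;> exact absurd this (by norm_num)
    · -- z = z 0 • e₀
      have hzs : z = fun i => z 0 * (Pi.single (0 : Fin (k+1)) (1 : ℤ) : Fin (k+1) → ℤ) i := by
        funext i
        by_cases hi : i = 0
        · rw [hi, Pi.single_eq_same, mul_one]
        · rw [Pi.single_eq_of_ne hi, mul_zero]
          exact hpar i hi
      have hker : B.mulVec (z 0 • y - B.det • w) = 0 := by
        rw [Matrix.mulVec_sub, Matrix.mulVec_smul, Matrix.mulVec_smul, hyB, hBw]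
        funext i
        have := congrFun hzs i
        simp only [Pi.sub_apply, Pi.smul_apply, smul_eq_mul, Pi.zero_apply]
        rw [this]
        ring
      have hv0 := congrFun (vec_eq_zero_of_mulVec_eq_zero hd hker) j₀
      simp only [Pi.sub_apply, Pi.smul_apply, smul_eq_mul, Pi.zero_apply, sub_eq_zero] at hv0
      have hyj₀ := hSy j₀ hj₀
      rcases h01 with h | h <;> rcases hyj₀ with hy1 | hy1 <;> rcases hwj₀ with hw1 | hw1 <;>
        rw [h, hy1, hw1] at hv0 <;> [skip; skip; skip; skip; skip; skip; skip; skip] <;>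
        first
          | (left; linarith)
          | (right; linarith)

/-- Ghouila-Houri (column version): a `{0, ±1}`-matrix is totally unimodular
if every column submatrix admits an equitable bicoloring, i.e. a 2-coloring
of its columns such that in every row the sum of red entries minus the sum of
blue entries lies in `{-1, 0, 1}`. -/
theorem ghouilaHouri_columns (m n : ℕ) (A : Matrix (Fin m) (Fin n) ℝ)
    (hentries : ∀ i j, A i j ∈ ({-1, 0, 1} : Set ℝ))
    (hcoloring : ∀ S : Finset (Fin n), ∃ c : Fin n → Bool,
      ∀ i, (∑ j ∈ S, (if c j then A i j else - A i j)) ∈ ({-1, 0, 1} : Set ℝ)) :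
    A.IsTotallyUnimodular := by
  classical
  set A' : Matrix (Fin m) (Fin n) ℤ :=
    Matrix.of (fun i j => if A i j = 1 then 1 else if A i j = -1 then -1 else 0) with hA'
  have hAA' : ∀ i j, ((A' i j : ℤ) : ℝ) = A i j := by
    intro i j
    have h3 := hentries i j
    simp only [Set.mem_insert_iff, Set.mem_singleton_iff] at h3
    rcases h3 with h | h | h <;> rw [hA'] <;>
      simp only [Matrix.of_apply, h] <;> norm_num
  have hcolZ : ∀ S : Finset (Fin n), ∃ c : Fin n → Bool,
      ∀ i, (∑ j ∈ S, (if c j then A' i j else - A' i j)) ∈ ({-1, 0, 1} : Set ℤ) := by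
    intro S
    obtain ⟨c, hc⟩ := hcoloring S
    refine ⟨c, fun i => ?_⟩
    have hcast : ((∑ j ∈ S, (if c j then A' i j else - A' i j) : ℤ) : ℝ)
        = ∑ j ∈ S, (if c j then A i j else - A i j) := by
      push_cast
      refine Finset.sum_congr rfl fun j _ => ?_
      split_ifs <;> simp [hAA' i j]
    have hmem := hc i
    rw [← hcast] at hmem
    simp only [Set.mem_insert_iff, Set.mem_singleton_iff] at hmem ⊢
    rcases hmem with h | h | h
    · left; exact_mod_cast h
    · right; left; exact_mod_cast h
    · right; right; exact_mod_cast h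
  have hTU := gh_int A' hcolZ
  intro k f g hf hg
  have hmap : A.submatrix f g = (A'.submatrix f g).map (Int.castRingHom ℝ) := by
    ext i j
    simp [Matrix.map_apply, hAA']
  rw [hmap, ← RingHom.mapMatrix_apply, ← RingHom.map_det]
  obtain ⟨s, hs⟩ := hTU k f g hf hg
  exact ⟨s, by rw [← hs]; cases s <;> simp⟩
end

section
/- Consider variables x_1 ∈ {0,1}, x_2 ∈ Z ∩ [0,10], actions a_1, a_2 with the linkage constraint a_2 = -10·a_1, the feasibility constraints x_1 + a_1 ∈ {0,1} (or [0,1] in the relaxation) and x_2 + a_2 ∈ [0,10], and the recourse condition x_1 + a_1 ≥ 1/2. Then for the point (x_1, x_2) = (0, 5): the continuous relaxation (allowing a_1 ∈ [0,1]) is feasible, but there is no integer-valued a_1 ∈ {0,1} making all constraints hold. -/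
/-- Counterexample to relaxation-exactness with non-unit linkage coefficients.
For the point `(x₁, x₂) = (0, 5)` with linkage `a₂ = -10 a₁`, feasibility
constraints `x₁ + a₁ ∈ [0,1]` (relaxation) or `x₁ + a₁ ∈ {0,1}` (discrete),
`x₂ + a₂ ∈ [0,10]`, and recourse condition `x₁ + a₁ ≥ 1/2`:
the continuous relaxation is feasible but the discrete problem is not. -/
theorem relaxation_feasible_discrete_infeasible :
    (∃ a₁ a₂ : ℝ, a₂ = -10 * a₁ ∧
      (0 : ℝ) + a₁ ∈ Set.Icc (0 : ℝ) 1 ∧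
      (5 : ℝ) + a₂ ∈ Set.Icc (0 : ℝ) 10 ∧
      (0 : ℝ) + a₁ ≥ 1 / 2) ∧
    ¬ (∃ a₁ a₂ : ℝ, (a₁ = 0 ∨ a₁ = 1) ∧ a₂ = -10 * a₁ ∧
      ((0 : ℝ) + a₁ = 0 ∨ (0 : ℝ) + a₁ = 1) ∧
      (5 : ℝ) + a₂ ∈ Set.Icc (0 : ℝ) 10 ∧
      (0 : ℝ) + a₁ ≥ 1 / 2) := by
  constructor
  · exact ⟨1/2, -5, by norm_num, by norm_num [Set.mem_Icc], by norm_num [Set.mem_Icc], by norm_num⟩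
  · rintro ⟨a₁, a₂, (rfl | rfl), rfl, _, h, hr⟩ <;>
      simp [Set.mem_Icc] at h hr <;> linarith
end
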